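/- Suppose an assignment {t_b}_{b∈L} solves problem (B) with budget k, and let ν ∈ L be any index maximizing β_p(t_b, r_b) over b ∈ L. Then the assignment {t'_b}_{b∈L} defined by t'_ν = t_ν + 1 and t'_b = t_b for b ≠ ν solves problem (B) with budget k+1 (this is the correctness of the greedy step of the BAR solver). -/

import Mathlib

/-!
Adding one transmission to block `b` with `t` transmissions raises `E(r_b, ·)` by exactly
`(1 - p) β_p(t, r_b)`: the new packet arrives with probability `1 - p` and increases the rank
precisely when fewer than `r_b` of the earlier packets arrived. Since `β_p(t, r)` is
non-increasing in `t`, the objective of (B) is a sum of concave functions of the `t_b`, and for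
such separable concave problems the greedy step is optimal by an exchange argument: any budget
`k + 1` assignment exceeds the optimum `t` at some block `b₀`; moving its last unit off `b₀`
gives a budget `k` assignment, which is no better than `t`, and the unit removed was worth at
most the marginal gain of `b₀` at `t`, hence at most that of `ν`.
-/

/-- `betaP p t r = ∑_{i=0}^{r-1} C(t,i) (1-p)^i p^(t-i)`. -/
noncomputable def betaP (p : ℝ) (t r : ℕ) : ℝ :=
  ∑ i ∈ Finset.range r, (t.choose i : ℝ) * (1 - p) ^ i * p ^ (t - i)

/-- Expected rank function `E(r,t) = ∑_{i=0}^{t} C(t,i) (1-p)^i p^(t-i) * min{i,r}`. -/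
noncomputable def expRank (p : ℝ) (r t : ℕ) : ℝ :=
  ∑ i ∈ Finset.range (t + 1),
    (t.choose i : ℝ) * (1 - p) ^ i * p ^ (t - i) * ((min i r : ℕ) : ℝ)

open Finset Function

section Allocation

variable {ι : Type*}

/-- Problem (B) with budget `k` for an arbitrary objective `f b` in place of `E(r_b, ·)`. -/
def IsOptimalAllocation (L : Finset ι) (f : ι → ℕ → ℝ) (k : ℕ) (t : ι → ℕ) : Prop :=
  ∑ b ∈ L, t b = k ∧
    ∀ t' : ι → ℕ, ∑ b ∈ L, t' b = k → ∑ b ∈ L, f b (t' b) ≤ ∑ b ∈ L, f b (t b)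

variable [DecidableEq ι]

theorem Finset.sum_update_add_eq {M : Type*} [AddCommMonoid M] {s : Finset ι} {c : ι}
    (hc : c ∈ s) (g : ι → M) (v : M) :
    ∑ b ∈ s, update g c v b + g c = ∑ b ∈ s, g b + v := by
  rw [sum_update_of_mem hc, ← sum_erase_add s g hc, sdiff_singleton_eq_erase, add_comm v,
    add_right_comm]

theorem Finset.sum_apply_update_add_eq {α M : Type*} [AddCommMonoid M] {s : Finset ι} {c : ι}
    (hc : c ∈ s) (f : ι → α → M) (g : ι → α) (v : α) :
    ∑ b ∈ s, f b (update g c v b) + f c (g c) = ∑ b ∈ s, f b (g b) + f c v := by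
  simp_rw [apply_update f g c v]
  exact sum_update_add_eq hc (fun b => f b (g b)) (f c v)

theorem IsOptimalAllocation.update_succ {L : Finset ι} {f : ι → ℕ → ℝ} {k : ℕ} {t : ι → ℕ}
    (hopt : IsOptimalAllocation L f k t)
    (hconcave : ∀ b ∈ L, Antitone fun n => f b (n + 1) - f b n) {ν : ι} (hν : ν ∈ L)
    (hmax : ∀ b ∈ L, f b (t b + 1) - f b (t b) ≤ f ν (t ν + 1) - f ν (t ν)) :
    IsOptimalAllocation L f (k + 1) (update t ν (t ν + 1)) := by
  obtain ⟨hsum, hbest⟩ := hopt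
  have hsum_succ := sum_update_add_eq hν t (t ν + 1)
  have hval_succ := sum_apply_update_add_eq hν f t (t ν + 1)
  refine ⟨by omega, fun t' ht' => ?_⟩
  obtain ⟨b₀, hb₀, hlt⟩ : ∃ b ∈ L, t b < t' b :=
    exists_lt_of_sum_lt (by rw [hsum, ht']; exact k.lt_succ_self)
  obtain ⟨a, ha⟩ : ∃ a, t' b₀ = a + 1 := ⟨t' b₀ - 1, by omega⟩
  have hsum_pred := sum_update_add_eq hb₀ t' a
  have hval_pred := sum_apply_update_add_eq hb₀ f t' a
  have hrest : ∑ b ∈ L, f b (update t' b₀ a b) ≤ ∑ b ∈ L, f b (t b) :=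
    hbest _ (by omega)
  have hgain : f b₀ (a + 1) - f b₀ a ≤ f ν (t ν + 1) - f ν (t ν) :=
    (hconcave b₀ hb₀ (by omega : t b₀ ≤ a)).trans (hmax b₀ hb₀)
  rw [ha] at hval_pred
  linarith

end Allocation

/-- The probability that exactly `i` of `t` packets arrive. -/
noncomputable def binomWeight (p : ℝ) (t i : ℕ) : ℝ :=
  (t.choose i : ℝ) * (1 - p) ^ i * p ^ (t - i)

theorem binomWeight_eq_zero_of_lt {p : ℝ} {t i : ℕ} (h : t < i) : binomWeight p t i = 0 := by
  simp [binomWeight, Nat.choose_eq_zero_of_lt h]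

theorem binomWeight_nonneg {p : ℝ} (hp0 : 0 ≤ p) (hp1 : p ≤ 1) (t i : ℕ) :
    0 ≤ binomWeight p t i := by
  have : 0 ≤ 1 - p := by linarith
  unfold binomWeight
  positivity

theorem binomWeight_succ_zero (p : ℝ) (t : ℕ) :
    binomWeight p (t + 1) 0 = p * binomWeight p t 0 := by
  simp [binomWeight, pow_succ, mul_comm]

theorem binomWeight_succ_succ (p : ℝ) (t i : ℕ) :
    binomWeight p (t + 1) (i + 1) = (1 - p) * binomWeight p t i + p * binomWeight p t (i + 1) := by
  simp only [binomWeight, Nat.choose_succ_succ, Nat.cast_add, Nat.add_sub_add_right]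
  rcases Nat.lt_or_ge i t with h | h
  · rw [show t - i = t - (i + 1) + 1 by omega]
    ring
  · rw [Nat.choose_eq_zero_of_lt (by omega : t < i + 1)]
    ring

theorem betaP_eq_sum_binomWeight (p : ℝ) (t r : ℕ) :
    betaP p t r = ∑ i ∈ range r, binomWeight p t i := rfl

theorem expRank_eq_sum_binomWeight (p : ℝ) (r t : ℕ) :
    expRank p r t = ∑ i ∈ range (t + 1), binomWeight p t i * ((min i r : ℕ) : ℝ) := rfl

theorem betaP_eq_sum_ite (p : ℝ) (t r : ℕ) :
    betaP p t r = ∑ i ∈ range (t + 1), if i < r then binomWeight p t i else 0 := by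
  have hvanish : ∀ i ∈ range r, binomWeight p t i ≠ 0 → i < t + 1 := fun i _ hi => by
    by_contra h
    exact hi (binomWeight_eq_zero_of_lt (by omega))
  rw [← sum_filter, betaP_eq_sum_binomWeight, ← sum_filter_of_ne hvanish]
  congr 1
  ext i
  simp only [mem_filter, mem_range]
  tauto

theorem betaP_succ_succ (p : ℝ) (t s : ℕ) :
    betaP p (t + 1) (s + 1) = p * betaP p t (s + 1) + (1 - p) * betaP p t s := by
  simp only [betaP_eq_sum_binomWeight, sum_range_succ', binomWeight_succ_succ,
    binomWeight_succ_zero, sum_add_distrib, ← mul_sum]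
  ring

theorem betaP_succ_le {p : ℝ} (hp0 : 0 ≤ p) (hp1 : p ≤ 1) (t r : ℕ) :
    betaP p (t + 1) r ≤ betaP p t r := by
  cases r with
  | zero => simp [betaP]
  | succ s =>
    have hmono : betaP p t s ≤ betaP p t (s + 1) := by
      rw [betaP_eq_sum_binomWeight, betaP_eq_sum_binomWeight, sum_range_succ]
      linarith [binomWeight_nonneg hp0 hp1 t s]
    rw [betaP_succ_succ]
    nlinarith

theorem betaP_antitone {p : ℝ} (hp0 : 0 ≤ p) (hp1 : p ≤ 1) (r : ℕ) :
    Antitone fun t => betaP p t r :=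
  antitone_nat_of_succ_le fun t => betaP_succ_le hp0 hp1 t r

theorem expRank_succ (p : ℝ) (r t : ℕ) :
    expRank p r (t + 1) = expRank p r t + (1 - p) * betaP p t r := by
  have hshift : ∑ i ∈ range (t + 1), binomWeight p t (i + 1) * ((min (i + 1) r : ℕ) : ℝ) =
      expRank p r t := by
    rw [sum_range_succ, binomWeight_eq_zero_of_lt t.lt_succ_self, expRank_eq_sum_binomWeight,
      sum_range_succ']
    simp
  have hrank_step : ∀ i, ((min (i + 1) r : ℕ) : ℝ) = (min i r : ℕ) + if i < r then 1 else 0 := by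
    intro i
    split_ifs with h
    · rw [show min (i + 1) r = min i r + 1 by omega, Nat.cast_succ]
    · rw [show min (i + 1) r = min i r by omega, add_zero]
  have hcount : ∑ i ∈ range (t + 1), binomWeight p t i * ((min (i + 1) r : ℕ) : ℝ) =
      expRank p r t + betaP p t r := by
    simp only [hrank_step, mul_add, mul_ite, mul_one, mul_zero, sum_add_distrib,
      expRank_eq_sum_binomWeight, betaP_eq_sum_ite]
  calc expRank p r (t + 1)
      = ∑ i ∈ range (t + 1), binomWeight p (t + 1) (i + 1) * ((min (i + 1) r : ℕ) : ℝ) := by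
        rw [expRank_eq_sum_binomWeight, sum_range_succ']
        simp
    _ = (1 - p) * ∑ i ∈ range (t + 1), binomWeight p t i * ((min (i + 1) r : ℕ) : ℝ) +
          p * ∑ i ∈ range (t + 1), binomWeight p t (i + 1) * ((min (i + 1) r : ℕ) : ℝ) := by
        simp only [binomWeight_succ_succ, add_mul, sum_add_distrib, mul_sum, mul_assoc]
    _ = expRank p r t + (1 - p) * betaP p t r := by
        rw [hcount, hshift]
        ring

theorem stmt15 {ι : Type*} [DecidableEq ι] (p : ℝ) (hp0 : 0 < p) (hp1 : p < 1)
    (L : Finset ι) (r : ι → ℕ) (k : ℕ)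
    (t : ι → ℕ) (hfeas : (∑ b ∈ L, t b) = k)
    (hopt : ∀ t' : ι → ℕ, (∑ b ∈ L, t' b) = k →
      ∑ b ∈ L, expRank p (r b) (t' b) ≤ ∑ b ∈ L, expRank p (r b) (t b))
    (ν : ι) (hν : ν ∈ L)
    (hmax : ∀ b ∈ L, betaP p (t b) (r b) ≤ betaP p (t ν) (r ν)) :
    (∑ b ∈ L, Function.update t ν (t ν + 1) b) = k + 1 ∧
    ∀ t' : ι → ℕ, (∑ b ∈ L, t' b) = k + 1 →
      ∑ b ∈ L, expRank p (r b) (t' b) ≤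
        ∑ b ∈ L, expRank p (r b) (Function.update t ν (t ν + 1) b) := by
  have hq : 0 ≤ 1 - p := by linarith
  have hgain : ∀ b n, expRank p (r b) (n + 1) - expRank p (r b) n = (1 - p) * betaP p n (r b) :=
    fun b n => by rw [expRank_succ]; ring
  refine IsOptimalAllocation.update_succ (f := fun b => expRank p (r b)) ⟨hfeas, hopt⟩
    (fun b _ m n hmn => ?_) hν (fun b hb => ?_)
  · simp only [hgain]
    exact mul_le_mul_of_nonneg_left (betaP_antitone hp0.le hp1.le (r b) hmn) hq
  · simp only [hgain]
    exact mul_le_mul_of_nonneg_left (hmax b hb) hq
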